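/- Let 𝒰^{(t)} = {(S_γ φ)|_{J_t^S ∪ L_t^S} : φ ∈ ker T₁^{(t)}} be the space of localized potentials, viewed as a subspace of ℝ^{L_t^S ∪ J_t^S}. For each p ∈ D ∪ ∂D define v_p ∈ ℝ^{D ∪ ∂D} by (v_p)_q = γ_{pq} for q ∈ N(p), (v_p)_p = −Σ_{r∈N(p)} γ_{pr}, and 0 otherwise. Then for d−1 ≤ t ≤ dn−1 one has the orthogonal direct-sum decomposition 𝒰^{(t)} ⊕ span{ v_p|_{L_t^S ∪ J_t^S} : p ∈ L_{t+1}^S } = ℝ^{L_t^S ∪ J_t^S}. -/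

import Mathlib

noncomputable section
open Classical Finset

namespace DiscreteCalderon

/-- Vertices of the ambient lattice `ℤ^d`. -/
abbrev V (d : ℕ) := Fin d → ℤ

/-- Interior vertex set `D = {x : 1 ≤ x_i ≤ n}`. -/
def Dset (d n : ℕ) : Set (V d) := {x | ∀ i, 1 ≤ x i ∧ x i ≤ (n : ℤ)}

/-- ℓ¹ distance. -/
def dist1 {d : ℕ} (p q : V d) : ℤ := ∑ i, |p i - q i|

/-- Boundary vertex set `∂D`: vertices at ℓ¹ distance 1 from `D`. -/
def Bset (d n : ℕ) : Set (V d) := {p | p ∉ Dset d n ∧ ∃ q ∈ Dset d n, dist1 p q = 1}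

/-- All vertices of the graph, `D ∪ ∂D`. -/
def Vset (d n : ℕ) : Set (V d) := Dset d n ∪ Bset d n

/-- Adjacency of the lattice graph: ℓ¹ distance 1, both endpoints vertices,
not both on the boundary. -/
def Adj (d n : ℕ) (p q : V d) : Prop :=
  dist1 p q = 1 ∧ p ∈ Vset d n ∧ q ∈ Vset d n ∧ (p ∈ Dset d n ∨ q ∈ Dset d n)

/-- A finite box containing all vertices. -/
def box (d n : ℕ) : Finset (V d) :=
  Fintype.piFinset (fun _ : Fin d => Finset.Icc (0 : ℤ) ((n : ℤ) + 1))

/-- Neighbours of `p` in the graph, as a finite set. -/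
def nbr (d n : ℕ) (p : V d) : Finset (V d) := (box d n).filter (fun q => Adj d n p q)

/-- Interior neighbours of `p`. -/
def nbrD (d n : ℕ) (p : V d) : Finset (V d) := (nbr d n p).filter (fun q => q ∈ Dset d n)

/-- The discrete (weighted) Laplacian `(Δ_γ u)_p = ∑_{q∈N(p)} γ_{qp}(u_q - u_p)`. -/
def lap (d n : ℕ) (γ : V d → V d → ℝ) (u : V d → ℝ) (p : V d) : ℝ :=
  ∑ q ∈ nbr d n p, γ q p * (u q - u p)

/-- The boundary current `(D_γ u)_p = ∑_{q∈N(p)∩D} γ_{pq}(u_q - u_p)`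
(there is exactly one interior neighbour of a boundary node). -/
def cur (d n : ℕ) (γ : V d → V d → ℝ) (u : V d → ℝ) (p : V d) : ℝ :=
  ∑ q ∈ nbrD d n p, γ p q * (u q - u p)

/-- A strictly positive symmetric conductivity. -/
def GoodCond (d n : ℕ) (γ : V d → V d → ℝ) : Prop :=
  (∀ p q, γ p q = γ q p) ∧ ∀ p q, Adj d n p q → 0 < γ p q

/-- The coordinate sum of a lattice point. -/
def sum1 {d : ℕ} (x : V d) : ℤ := ∑ i, x i

/-- Interior diagonal slice `L_t`. -/
def L (d n : ℕ) (t : ℤ) : Set (V d) := {x | x ∈ Dset d n ∧ sum1 x = t}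

/-- `L_t^S = ∪_{ℓ ≤ t} L_ℓ`. -/
def LS (d n : ℕ) (t : ℤ) : Set (V d) := {x | x ∈ Dset d n ∧ sum1 x ≤ t}

/-- Boundary diagonal slice `K_t`. -/
def K (d n : ℕ) (t : ℤ) : Set (V d) := {x | x ∈ Bset d n ∧ sum1 x = t}

/-- `K_t^- = {x ∈ K_t : min_i x_i = 0}`. -/
def Km (d n : ℕ) (t : ℤ) : Set (V d) := {x | x ∈ K d n t ∧ ∃ i, x i = 0}

/-- `K_t^+ = {x ∈ K_t : max_i x_i = n+1}`. -/
def Kp (d n : ℕ) (t : ℤ) : Set (V d) := {x | x ∈ K d n t ∧ ∃ i, x i = (n : ℤ) + 1}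

/-- `K_t^{S-} = ∪_{ℓ ≤ t} K_ℓ^-`. -/
def KSm (d n : ℕ) (t : ℤ) : Set (V d) := {x | x ∈ Bset d n ∧ sum1 x ≤ t ∧ ∃ i, x i = 0}

/-- `K_t^{S+} = ∪_{ℓ ≤ t} K_ℓ^+`. -/
def KSp (d n : ℕ) (t : ℤ) : Set (V d) := {x | x ∈ Bset d n ∧ sum1 x ≤ t ∧ ∃ i, x i = (n : ℤ) + 1}

/-- The lower boundary region `J_t^S = K_t^{S-} ∪ K_{t+1}^{S+}`. -/
def JS (d n : ℕ) (t : ℤ) : Set (V d) := KSm d n t ∪ KSp d n (t + 1)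

/-- `J_t = K_t^- ∪ K_{t+1}^+`. -/
def Jslice (d n : ℕ) (t : ℤ) : Set (V d) := Km d n t ∪ Kp d n (t + 1)

/-- `u` is the γ-harmonic extension of boundary data `φ` (zero-extension convention
outside `D ∪ ∂D`). -/
def IsSol (d n : ℕ) (γ : V d → V d → ℝ) (φ u : V d → ℝ) : Prop :=
  (∀ p, p ∉ Vset d n → u p = 0) ∧
  (∀ p ∈ Dset d n, lap d n γ u p = 0) ∧
  (∀ p ∈ Bset d n, u p = φ p)

/-- The Laplacian row vector `v_p`. -/
def vrow (d n : ℕ) (γ : V d → V d → ℝ) (p : V d) : V d → ℝ := fun q =>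
  if Adj d n p q then γ p q
  else if q = p then -(∑ r ∈ nbr d n p, γ p r) else 0

/-- Restriction of a function to a set (zero outside). -/
def rst {d : ℕ} (S : Set (V d)) (f : V d → ℝ) : V d → ℝ := fun q => if q ∈ S then f q else 0

/-- Euclidean inner product of (vertex-supported) functions. -/
def dot (d n : ℕ) (f g : V d → ℝ) : ℝ := ∑ p ∈ box d n, f p * g p

/-- The localized solution space `𝒰^{(t)}`: restrictions to `L_t^S ∪ J_t^S` of
harmonic extensions of boundary potentials in `ker T₁^{(t)}`. -/
def Uset (d n : ℕ) (γ : V d → V d → ℝ) (t : ℤ) : Set (V d → ℝ) :=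
  {u | (∀ p, p ∉ LS d n t ∪ JS d n t → u p = 0) ∧
    ∃ φ w : V d → ℝ, (∀ p, p ∉ JS d n t → φ p = 0) ∧ IsSol d n γ φ w ∧
      (∀ p ∈ L d n (t + 1), w p = 0) ∧ ∀ p ∈ LS d n t ∪ JS d n t, u p = w p}

/-- The set `E_t` of edges between the consecutive layers:
`E(K_t^-, L_{t+1}) ∪ E(L_t, K_{t+1}^+) ∪ E(L_t, L_{t+1})`. -/
def EdgeT (d n : ℕ) (t : ℤ) (p q : V d) : Prop :=
  Adj d n p q ∧
    ((p ∈ Km d n t ∧ q ∈ L d n (t + 1)) ∨ (q ∈ Km d n t ∧ p ∈ L d n (t + 1)) ∨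
     (p ∈ L d n t ∧ q ∈ Kp d n (t + 1)) ∨ (q ∈ L d n t ∧ p ∈ Kp d n (t + 1)) ∨
     (p ∈ L d n t ∧ q ∈ L d n (t + 1)) ∨ (q ∈ L d n t ∧ p ∈ L d n (t + 1)))

/-- The edge vector `J_p^u ∈ ℝ^{E_t}`, `J_p^u(pq) = u_p - u_q` on edges of `E_t`
incident to `p`, and `0` otherwise (as a symmetric function of edge endpoints). -/
def Jvec (d n : ℕ) (t : ℤ) (u : V d → ℝ) (p : V d) : V d → V d → ℝ := fun a b =>
  if EdgeT d n t a b then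
    (if a = p then u a - u b else if b = p then u b - u a else 0)
  else 0

/-- Inner product of edge functions. -/
def dotE (d n : ℕ) (f g : V d → V d → ℝ) : ℝ :=
  ∑ p ∈ box d n, ∑ q ∈ box d n, f p q * g p q

/-! Pairing with the row `v_p` computes `(Δ_γ ·)_p`. An element of `𝒰^{(t)}` comes from a
harmonic `w` that vanishes on `L_{t+1}` and on the boundary outside `J_t^S`; since every interior
node above level `d` has a neighbour one level lower, the maximum principle makes `w` vanish on
all levels above `t`, so pairing its restriction with `v_p|` gives `(Δ_γ w)_p = 0`. Conversely,
the component of a vector orthogonal to the span of the `v_p|` is harmonic, hence lies in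
`𝒰^{(t)}`. -/

section LatticeGeometry

variable {d n : ℕ}

lemma dist1_comm (p q : V d) : dist1 p q = dist1 q p :=
  Finset.sum_congr rfl fun _ _ => abs_sub_comm _ _

lemma abs_sub_le_dist1 (p q : V d) (i : Fin d) : |p i - q i| ≤ dist1 p q :=
  Finset.single_le_sum (f := fun i => |p i - q i|) (fun _ _ => abs_nonneg _) (mem_univ i)

lemma sum1_sub_sum1 (p q : V d) : sum1 p - sum1 q = ∑ i, (p i - q i) :=
  (Finset.sum_sub_distrib _ _).symm

lemma sum1_le_sum1_add_dist1 (p q : V d) : sum1 p ≤ sum1 q + dist1 p q := by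
  have : sum1 p - sum1 q ≤ dist1 p q := by
    rw [sum1_sub_sum1]; exact Finset.sum_le_sum fun i _ => le_abs_self _
  omega

lemma le_of_dist1_eq_sum1_sub {p q : V d} (h : dist1 p q = sum1 p - sum1 q) (i : Fin d) :
    q i ≤ p i := by
  rw [sum1_sub_sum1, dist1, eq_comm,
    Finset.sum_eq_sum_iff_of_le fun i _ => le_abs_self (p i - q i)] at h
  have := h i (mem_univ i)
  have := abs_nonneg (p i - q i)
  omega

lemma Adj.symm {p q : V d} (h : Adj d n p q) : Adj d n q p :=
  ⟨by rw [dist1_comm]; exact h.1, h.2.2.1, h.2.1, h.2.2.2.symm⟩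

lemma not_adj_self (p : V d) : ¬ Adj d n p p := fun h => by
  simp [Adj, dist1] at h

lemma Adj.sum1_sub_one_le {p q : V d} (h : Adj d n p q) : sum1 p - 1 ≤ sum1 q := by
  have := sum1_le_sum1_add_dist1 p q; rw [h.1] at this; omega

lemma mem_box_of_mem_Vset {p : V d} (h : p ∈ Vset d n) : p ∈ box d n := by
  simp only [box, Fintype.mem_piFinset, Finset.mem_Icc]
  intro i
  rcases h with hD | ⟨-, q, hq, hpq⟩
  · have := hD i; omega
  · have := abs_le.mp ((abs_sub_le_dist1 p q i).trans hpq.le); have := hq i; omega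

lemma Adj.mem_nbr {p q : V d} (h : Adj d n p q) : q ∈ nbr d n p :=
  Finset.mem_filter.mpr ⟨mem_box_of_mem_Vset h.2.2.1, h⟩

lemma Dset_finite : (Dset d n).Finite :=
  (box d n).finite_toSet.subset fun _ hp => mem_box_of_mem_Vset (Or.inl hp)

lemma exists_adj_sum1_lt {p : V d} (hp : p ∈ Dset d n) (hlev : (d : ℤ) < sum1 p) :
    ∃ q, Adj d n p q ∧ sum1 q < sum1 p := by
  obtain ⟨i, hi⟩ : ∃ i, 2 ≤ p i := by
    by_contra! h
    have : sum1 p ≤ ∑ _i : Fin d, (1 : ℤ) := Finset.sum_le_sum fun i _ => by have := h i; omega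
    simp only [sum_const, card_univ, Fintype.card_fin, Int.nsmul_eq_mul, mul_one] at this
    omega
  set q := p - Pi.single i 1
  have hq : q ∈ Dset d n := fun j => by
    have := hp j
    rcases eq_or_ne j i with rfl | hj
    · simp only [q, Pi.sub_apply, Pi.single_eq_same]; omega
    · simpa [q, hj] using this
  have hsum : sum1 q = sum1 p - 1 := by simp [q, sum1, Finset.sum_sub_distrib]
  refine ⟨q, ⟨?_, Or.inl hp, Or.inl hq, Or.inl hp⟩, by omega⟩
  simp [dist1, q, Pi.single_apply, apply_ite (abs : ℤ → ℤ)]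

end LatticeGeometry

section Laplacian

variable {d n : ℕ} {γ : V d → V d → ℝ}

lemma lap_neg (u : V d → ℝ) (p : V d) : lap d n γ (-u) p = -lap d n γ u p := by
  simp only [lap, Pi.neg_apply, ← Finset.sum_neg_distrib]
  exact Finset.sum_congr rfl fun _ _ => by ring

lemma dot_vrow (hsymm : ∀ p q, γ p q = γ q p) {p : V d} (hp : p ∈ box d n)
    (u : V d → ℝ) : dot d n u (vrow d n γ p) = lap d n γ u p := by
  have hv : ∀ q, vrow d n γ p q = (if Adj d n p q then γ p q else 0) +
      if q = p then -∑ r ∈ nbr d n p, γ p r else 0 := fun q => by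
    unfold vrow
    by_cases h : Adj d n p q
    · have : q ≠ p := by rintro rfl; exact not_adj_self q h
      simp [h, this]
    · simp [h]
  simp only [dot, hv, mul_add, Finset.sum_add_distrib, mul_ite, mul_zero]
  rw [Finset.sum_ite_eq', if_pos hp, ← Finset.sum_filter]
  simp only [lap, nbr, mul_sub, Finset.sum_sub_distrib, ← Finset.sum_mul, hsymm p, mul_comm (u _)]
  ring

lemma eq_of_lap_eq_zero_of_le (hγ : ∀ p q, Adj d n p q → 0 < γ p q) {u : V d → ℝ}
    {p : V d} (hlap : lap d n γ u p = 0) (hle : ∀ q, Adj d n p q → u q ≤ u p)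
    {q : V d} (hpq : Adj d n p q) : u q = u p := by
  have hterm : ∀ r ∈ nbr d n p, γ r p * (u r - u p) ≤ 0 := fun r hr => by
    have hpr := (Finset.mem_filter.mp hr).2
    exact mul_nonpos_of_nonneg_of_nonpos (hγ r p hpr.symm).le (by linarith [hle r hpr])
  have := (Finset.sum_eq_zero_iff_of_nonpos hterm).mp hlap q hpq.mem_nbr
  rcases mul_eq_zero.mp this with h | h
  · exact absurd h (hγ q p hpq.symm).ne'
  · linarith

end Laplacian

section MaximumPrinciple

variable {d n : ℕ} {γ : V d → V d → ℝ}

/-- Take a maximiser of `u` on `Ω` of least level: it agrees with its lower neighbour,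
which therefore lies in `Ω` at a lower level unless the maximum is `0`. -/
lemma le_zero_of_lap_eq_zero (hγ : ∀ p q, Adj d n p q → 0 < γ p q) {Ω : Set (V d)}
    (hΩ : Ω.Finite) {u : V d → ℝ} (hharm : ∀ p ∈ Ω, lap d n γ u p = 0)
    (hext : ∀ p ∈ Ω, ∀ q, Adj d n p q → q ∉ Ω → u q = 0)
    (hdesc : ∀ p ∈ Ω, ∃ q, Adj d n p q ∧ sum1 q < sum1 p) : ∀ p ∈ Ω, u p ≤ 0 := by
  by_contra! ⟨p₀, hp₀, hpos⟩
  obtain ⟨m, hm, hmax⟩ := Set.exists_max_image Ω u hΩ ⟨p₀, hp₀⟩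
  obtain ⟨p, ⟨hp, hpm⟩, hmin⟩ := Set.exists_min_image {p ∈ Ω | u p = u m} sum1
    (hΩ.subset (Set.sep_subset _ _)) ⟨m, hm, rfl⟩
  have hm_pos : 0 < u m := hpos.trans_le (hmax p₀ hp₀)
  have hle : ∀ q, Adj d n p q → u q ≤ u p := fun q hpq => by
    by_cases hq : q ∈ Ω
    · exact hpm ▸ hmax q hq
    · rw [hext p hp q hpq hq]; linarith
  obtain ⟨q, hpq, hlt⟩ := hdesc p hp
  have hqp := eq_of_lap_eq_zero_of_le hγ (hharm p hp) hle hpq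
  by_cases hq : q ∈ Ω
  · exact (hmin q ⟨hq, hqp.trans hpm⟩).not_gt hlt
  · rw [hext p hp q hpq hq] at hqp; linarith

lemma eq_zero_of_lap_eq_zero (hγ : ∀ p q, Adj d n p q → 0 < γ p q) {Ω : Set (V d)}
    (hΩ : Ω.Finite) {u : V d → ℝ} (hharm : ∀ p ∈ Ω, lap d n γ u p = 0)
    (hext : ∀ p ∈ Ω, ∀ q, Adj d n p q → q ∉ Ω → u q = 0)
    (hdesc : ∀ p ∈ Ω, ∃ q, Adj d n p q ∧ sum1 q < sum1 p) : ∀ p ∈ Ω, u p = 0 := by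
  have hneg := le_zero_of_lap_eq_zero hγ hΩ (u := -u)
    (fun p hp => by rw [lap_neg, hharm p hp, neg_zero])
    (fun p hp q hpq hq => by rw [Pi.neg_apply, hext p hp q hpq hq, neg_zero]) hdesc
  exact fun p hp => le_antisymm (le_zero_of_lap_eq_zero hγ hΩ hharm hext hdesc p hp)
    (neg_nonpos.mp (hneg p hp))

end MaximumPrinciple

section Slices

variable {d n : ℕ} {t : ℤ}

lemma JS_subset_Bset : JS d n t ⊆ Bset d n := by
  rintro p (h | h) <;> exact h.1

lemma LS_union_JS_subset_Vset : LS d n t ∪ JS d n t ⊆ Vset d n :=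
  Set.union_subset (fun _ hp => Or.inl hp.1) (JS_subset_Bset.trans Set.subset_union_right)

lemma notMem_LS_union_JS_of_lt {p : V d} (hp : p ∈ Dset d n) (hlev : t < sum1 p) :
    p ∉ LS d n t ∪ JS d n t := by
  rintro (h | h)
  · exact hlev.not_ge h.2
  · exact (JS_subset_Bset h).1 hp

/-- A node of `K_{t+1}^{S+}` has a coordinate `n + 1`, so it cannot sit just below an
interior node: going up one level from it only increases coordinates. -/
lemma notMem_LS_union_JS_of_adj {p q : V d} (hp : p ∈ Dset d n) (hlev : t + 2 ≤ sum1 p)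
    (hpq : Adj d n p q) : q ∉ LS d n t ∪ JS d n t := by
  have hq := hpq.sum1_sub_one_le
  rintro (h | h | ⟨-, hle, i, hi⟩)
  · have := h.2; omega
  · have := h.2.1; omega
  · have := le_of_dist1_eq_sum1_sub (by rw [hpq.1]; omega) i
    have := (hp i).2
    omega

end Slices

lemma IsSol.eq_zero_of_notMem {d n : ℕ} {γ : V d → V d → ℝ}
    (hγ : ∀ p q, Adj d n p q → 0 < γ p q) {t : ℤ} (ht : (d : ℤ) - 1 ≤ t) {φ w : V d → ℝ}
    (hsol : IsSol d n γ φ w) (hφ : ∀ p, p ∉ JS d n t → φ p = 0)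
    (hL : ∀ p ∈ L d n (t + 1), w p = 0) : ∀ p, p ∉ LS d n t ∪ JS d n t → w p = 0 := by
  obtain ⟨hout, hharm, hbdy⟩ := hsol
  have hΩ : ∀ p ∈ {p | p ∈ Dset d n ∧ t + 2 ≤ sum1 p}, w p = 0 := by
    refine eq_zero_of_lap_eq_zero hγ (Dset_finite.subset fun _ hp => hp.1)
      (fun p hp => hharm p hp.1) (fun p hp q hpq hq => ?_)
      (fun p hp => exists_adj_sum1_lt hp.1 (by have := hp.2; omega))
    rcases hpq.2.2.1 with hqD | hqB
    · have := hpq.sum1_sub_one_le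
      have := hp.2
      exact hL q ⟨hqD, by by_contra; exact hq ⟨hqD, by omega⟩⟩
    · rw [hbdy q hqB]
      exact hφ q fun h => notMem_LS_union_JS_of_adj hp.1 hp.2 hpq (Or.inr h)
  intro p hp
  by_cases hpV : p ∈ Vset d n
  · rcases hpV with hpD | hpB
    · rcases lt_trichotomy (sum1 p) (t + 1) with hlt | heq | hgt
      · exact absurd (Or.inl ⟨hpD, by omega⟩) hp
      · exact hL p ⟨hpD, heq⟩
      · exact hΩ p ⟨hpD, by omega⟩
    · exact (hbdy p hpB).trans (hφ p fun h => hp (Or.inr h))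
  · exact hout p hpV

section InnerProduct

/-- The form `∑ p ∈ s, f p * g p` is the Euclidean inner product after restriction to `s`,
so orthogonal projection onto the image of `W` provides `z`. -/
lemma exists_mem_forall_sum_sub_mul_eq_zero {α : Type*} (s : Finset α)
    (W : Submodule ℝ (α → ℝ)) (x : α → ℝ) :
    ∃ z ∈ W, ∀ g ∈ W, ∑ p ∈ s, (x - z) p * g p = 0 := by
  let ι : (α → ℝ) →ₗ[ℝ] EuclideanSpace ℝ s :=
    (EuclideanSpace.equiv s ℝ).symm.toLinearMap ∘ₗ LinearMap.funLeft ℝ ℝ Subtype.val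
  have hι : ∀ f g : α → ℝ, ∑ p ∈ s, f p * g p = inner ℝ (ι g) (ι f) := fun f g => by
    simp [ι, PiLp.inner_apply, Finset.sum_attach s (fun p => f p * g p)]
  obtain ⟨z, hz, hzx⟩ := Submodule.mem_map.mp ((W.map ι).starProjection_apply_mem (ι x))
  refine ⟨z, hz, fun g hg => ?_⟩
  rw [hι, map_sub, hzx]
  exact Submodule.inner_right_of_mem_orthogonal (Submodule.mem_map_of_mem hg)
    ((W.map ι).sub_starProjection_mem_orthogonal (ι x))

variable {d n : ℕ}

lemma dot_rst_of_eq_zero {S : Set (V d)} {u : V d → ℝ} (hu : ∀ p, p ∉ S → u p = 0)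
    (f : V d → ℝ) : dot d n u (rst S f) = dot d n u f :=
  Finset.sum_congr rfl fun q _ => by
    unfold rst
    split_ifs with hq
    · rfl
    · rw [hu q hq, zero_mul, zero_mul]

lemma dot_eq_zero_of_mem_span {u z : V d → ℝ} {s : Set (V d → ℝ)}
    (hs : ∀ g ∈ s, dot d n u g = 0) (hz : z ∈ Submodule.span ℝ s) : dot d n u z = 0 := by
  induction hz using Submodule.span_induction with
  | mem g hg => exact hs g hg
  | zero => simp [dot]
  | add a b _ _ ha hb =>
    simp only [dot, Pi.add_apply, mul_add, Finset.sum_add_distrib] at ha hb ⊢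
    rw [ha, hb, add_zero]
  | smul c a _ ha =>
    simp only [dot, Pi.smul_apply, smul_eq_mul, mul_left_comm _ c, ← Finset.mul_sum] at ha ⊢
    rw [ha, mul_zero]

lemma eq_zero_of_mem_span {S : Set (V d)} {z : V d → ℝ} {s : Set (V d → ℝ)}
    (hs : ∀ g ∈ s, ∀ p, p ∉ S → g p = 0) (hz : z ∈ Submodule.span ℝ s) :
    ∀ p, p ∉ S → z p = 0 := by
  have hle : Submodule.span ℝ s ≤ Submodule.pi Sᶜ fun _ => ⊥ :=
    Submodule.span_le.mpr fun g hg =>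
      Submodule.mem_pi.mpr fun p hp => (Submodule.mem_bot ℝ).mpr (hs g hg p hp)
  exact fun p hp => (Submodule.mem_bot ℝ).mp (Submodule.mem_pi.mp (hle hz) p hp)

end InnerProduct

section LocalizedPotentials

variable {d n : ℕ} {γ : V d → V d → ℝ} {t : ℤ}

lemma dot_rst_vrow_eq_zero_of_mem_Uset (hγ : GoodCond d n γ) (ht : (d : ℤ) - 1 ≤ t)
    {u : V d → ℝ} (hu : u ∈ Uset d n γ t) {p : V d} (hp : p ∈ LS d n (t + 1)) :
    dot d n u (rst (LS d n t ∪ JS d n t) (vrow d n γ p)) = 0 := by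
  obtain ⟨hu0, φ, w, hφ, hsol, hwL, huw⟩ := hu
  have hw0 := hsol.eq_zero_of_notMem hγ.2 ht hφ hwL
  obtain rfl : u = w := funext fun q => by
    by_cases hq : q ∈ LS d n t ∪ JS d n t
    · exact huw q hq
    · rw [hu0 q hq, hw0 q hq]
  rw [dot_rst_of_eq_zero hu0, dot_vrow hγ.1 (mem_box_of_mem_Vset (Or.inl hp.1))]
  exact hsol.2.1 p hp.1

/-- Orthogonality to the `v_p` with `p ∈ L_{t+1}^S` is harmonicity up to level `t + 1`;
above it a function supported in `L_t^S ∪ J_t^S` is harmonic for support reasons. -/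
lemma mem_Uset_of_forall_dot_rst_vrow_eq_zero (hsymm : ∀ p q, γ p q = γ q p)
    {u : V d → ℝ} (hu0 : ∀ p, p ∉ LS d n t ∪ JS d n t → u p = 0)
    (horth : ∀ p ∈ LS d n (t + 1), dot d n u (rst (LS d n t ∪ JS d n t) (vrow d n γ p)) = 0) :
    u ∈ Uset d n γ t := by
  refine ⟨hu0, rst (JS d n t) u, u, fun p hp => if_neg hp,
    ⟨fun p hp => hu0 p fun h => hp (LS_union_JS_subset_Vset h), fun p hp => ?_, fun p hp => ?_⟩,
    fun p hp => hu0 p (notMem_LS_union_JS_of_lt hp.1 (by have := hp.2; omega)), fun _ _ => rfl⟩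
  · by_cases hlev : sum1 p ≤ t + 1
    · rw [← dot_vrow hsymm (mem_box_of_mem_Vset (Or.inl hp)), ← dot_rst_of_eq_zero hu0]
      exact horth p ⟨hp, hlev⟩
    · refine Finset.sum_eq_zero fun q hq => ?_
      rw [hu0 p (notMem_LS_union_JS_of_lt hp (by omega)),
        hu0 q (notMem_LS_union_JS_of_adj hp (by omega) (Finset.mem_filter.mp hq).2),
        sub_zero, mul_zero]
  · unfold rst
    split_ifs with hJ
    · rfl
    · refine hu0 p ?_
      rintro (h | h)
      exacts [hp.1 h.1, hJ h]

end LocalizedPotentials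

theorem stmt6_general (d n : ℕ)
    (γ : V d → V d → ℝ) (hγ : GoodCond d n γ)
    (t : ℤ) (ht1 : (d : ℤ) - 1 ≤ t) :
    (∀ u ∈ Uset d n γ t,
      ∀ z ∈ Submodule.span ℝ
        ((fun p => rst (LS d n t ∪ JS d n t) (vrow d n γ p)) '' LS d n (t + 1)),
      dot d n u z = 0) ∧
    (∀ x : V d → ℝ, (∀ p, p ∉ LS d n t ∪ JS d n t → x p = 0) →
      ∃ u ∈ Uset d n γ t,
        ∃ z ∈ Submodule.span ℝ
          ((fun p => rst (LS d n t ∪ JS d n t) (vrow d n γ p)) '' LS d n (t + 1)),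
        x = u + z) := by
  refine ⟨fun u hu z hz => dot_eq_zero_of_mem_span ?_ hz, fun x hx => ?_⟩
  · rintro _ ⟨p, hp, rfl⟩
    exact dot_rst_vrow_eq_zero_of_mem_Uset hγ ht1 hu hp
  · obtain ⟨z, hz, horth⟩ := exists_mem_forall_sum_sub_mul_eq_zero (box d n)
      (Submodule.span ℝ ((fun p => rst (LS d n t ∪ JS d n t) (vrow d n γ p)) '' LS d n (t + 1))) x
    have hz0 : ∀ p, p ∉ LS d n t ∪ JS d n t → z p = 0 := by
      refine eq_zero_of_mem_span ?_ hz
      rintro _ ⟨p, -, rfl⟩ q hq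
      exact if_neg hq
    refine ⟨x - z, mem_Uset_of_forall_dot_rst_vrow_eq_zero hγ.1 (fun p hp => ?_)
      (fun p hp => horth _ (Submodule.subset_span ⟨p, hp, rfl⟩)), z, hz, (sub_add_cancel x z).symm⟩
    rw [Pi.sub_apply, hx p hp, hz0 p hp, sub_zero]

/-- the orthogonal direct-sum decomposition
`𝒰^{(t)} ⊕ span{ v_p|_{L_t^S ∪ J_t^S} : p ∈ L_{t+1}^S } = ℝ^{L_t^S ∪ J_t^S}`. -/
theorem stmt6 (d n : ℕ) (hd : 2 ≤ d) (hn : 1 ≤ n)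
    (γ : V d → V d → ℝ) (hγ : GoodCond d n γ)
    (t : ℤ) (ht1 : (d : ℤ) - 1 ≤ t) (ht2 : t ≤ (d : ℤ) * n - 1) :
    (∀ u ∈ Uset d n γ t,
      ∀ z ∈ Submodule.span ℝ
        ((fun p => rst (LS d n t ∪ JS d n t) (vrow d n γ p)) '' LS d n (t + 1)),
      dot d n u z = 0) ∧
    (∀ x : V d → ℝ, (∀ p, p ∉ LS d n t ∪ JS d n t → x p = 0) →
      ∃ u ∈ Uset d n γ t,
        ∃ z ∈ Submodule.span ℝ
          ((fun p => rst (LS d n t ∪ JS d n t) (vrow d n γ p)) '' LS d n (t + 1)),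
        x = u + z) :=
  stmt6_general d n γ hγ t ht1

end DiscreteCalderon
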